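/- arXiv:1904.06258 — 3 statements merged into one kernel-verified Lean document; each statement's English description precedes it below -/
import Mathlib

section
/- Let p ∈ (0,1], q ∈ [0,1), C ≥ 0, β > 0, let h_max ≥ 1 be an integer, and let δ ≥ 0 be real. On a probability space, let H take values in {1, …, h_max} with P(H = h) = C·q^(h−1); let (K_i)_{i≥1} be i.i.d. geometric random variables on the positive integers with parameter p, independent of H; let g = Σ_{i=1}^{H} K_i; and let f be exponentially distributed with rate β, independent of (H, (K_i)). Define the reward r = 1 if f + g ≤ δ and r = 0 otherwise. Then r is a Bernoulli random variable with success probability P(r = 1) = C · Σ_{k=1}^{⌊δ⌋} [ (1 − e^(−β(δ−k))) · Σ_{h=1}^{min(k, h_max)} C(k−1, h−1) p^h (1−p)^(k−h) q^(h−1) ]. -/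
/-!
Since every `K i` is almost surely positive, the partial sums `K 0 + ⋯ + K (h - 1)` follow the
negative binomial law `negBinomialMass p h`: by induction on `h`, convolving with one more geometric
variable is the hockey-stick identity. Conditioning on `H`, which is independent of these partial
sums, gives the law of `g`. Conditioning on `g`, which is independent of `f`, gives
`P(f + g ≤ δ) = ∑ₖ P(g = k) P(f ≤ δ - k)`; the term `k = 0` is null and the terms `k > ⌊δ⌋`
vanish because `f ≥ 0`.
-/

open Finset MeasureTheory ProbabilityTheory Real
open scoped ENNReal

/-- For `1 ≤ h` and `1 ≤ k`, the probability that the `h`-th success of independent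
Bernoulli(`p`) trials happens at trial `k`; at `k = 0` the value is junk (`p` when `h = 1`). -/
def negBinomialMass (p : ℝ) (h k : ℕ) : ℝ :=
  (k - 1).choose (h - 1) * p ^ h * (1 - p) ^ (k - h)

namespace negBinomialMass

variable {p : ℝ} {h k : ℕ}

lemma nonneg (hp0 : 0 ≤ p) (hp1 : p ≤ 1) : 0 ≤ negBinomialMass p h k := by
  unfold negBinomialMass
  have : 0 ≤ 1 - p := by linarith
  positivity

lemma one_left : negBinomialMass p 1 k = p * (1 - p) ^ (k - 1) := by
  simp [negBinomialMass]

lemma eq_zero_of_lt (hk : 1 ≤ k) (hkh : k < h) : negBinomialMass p h k = 0 := by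
  simp [negBinomialMass, Nat.choose_eq_zero_of_lt (show k - 1 < h - 1 by omega)]

lemma sum_mul_one_left (hh : 1 ≤ h) :
    ∑ j ∈ Icc 1 (k - 1), negBinomialMass p h j * negBinomialMass p 1 (k - j) =
      negBinomialMass p (h + 1) k := by
  obtain ⟨a, rfl⟩ : ∃ a, h = a + 1 := ⟨h - 1, by omega⟩
  rcases le_or_gt k (a + 1) with hk | hk
  · rw [sum_eq_zero fun j hj => by
      rw [eq_zero_of_lt (mem_Icc.1 hj).1 (by simp at hj; omega), zero_mul]]
    simp [negBinomialMass, Nat.choose_eq_zero_of_lt (show k - 1 < a + 1 by omega)]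
  obtain ⟨n, rfl⟩ : ∃ n, k = a + 2 + n := ⟨k - a - 2, by omega⟩
  have hsub : Ico (a + 1) (a + 2 + n) ⊆ Icc 1 (a + 2 + n - 1) := by
    intro j; simp only [mem_Ico, mem_Icc]; omega
  rw [← sum_subset hsub fun j hj hj' => by
      rw [eq_zero_of_lt (mem_Icc.1 hj).1 (by simp at hj hj'; omega), zero_mul],
    sum_Ico_eq_sum_range]
  calc ∑ i ∈ range (a + 2 + n - (a + 1)),
        negBinomialMass p (a + 1) (a + 1 + i) * negBinomialMass p 1 (a + 2 + n - (a + 1 + i))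
      = ∑ i ∈ range (n + 1), ((i + a).choose a : ℝ) * (p ^ (a + 2) * (1 - p) ^ n) := by
        refine sum_congr (by congr 1; omega) fun i hi => ?_
        have hi : i ≤ n := by simp at hi; omega
        simp only [negBinomialMass, Nat.sub_self, Nat.choose_zero_right, Nat.cast_one]
        rw [show a + 2 + n - (a + 1 + i) - 1 = n - i by omega, show a + 1 + i - 1 = i + a by omega,
          show a + 1 + i - (a + 1) = i by omega, add_tsub_cancel_right,
          ← pow_sub_mul_pow (1 - p) hi]
        ring
    _ = negBinomialMass p (a + 1 + 1) (a + 2 + n) := by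
        rw [← sum_mul, ← Nat.cast_sum, Nat.sum_range_add_choose, negBinomialMass]
        rw [show a + 2 + n - 1 = n + a + 1 by omega, show a + 2 + n - (a + 1 + 1) = n by omega]
        simp [pow_succ]; ring

end negBinomialMass

lemma ENNReal.sum_ofReal_mul_ofReal {ι : Type*} {s : Finset ι} {a b : ι → ℝ}
    (ha : ∀ i ∈ s, 0 ≤ a i) (hb : ∀ i ∈ s, 0 ≤ b i) :
    ∑ i ∈ s, ENNReal.ofReal (a i) * ENNReal.ofReal (b i) = ENNReal.ofReal (∑ i ∈ s, a i * b i) := by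
  rw [ENNReal.ofReal_sum_of_nonneg fun i hi => mul_nonneg (ha i hi) (hb i hi)]
  exact sum_congr rfl fun i hi => (ENNReal.ofReal_mul (ha i hi)).symm

lemma measurable_sum_range_apply_none :
    Measurable fun v : Option ℕ → ℕ => ∑ i ∈ range (v none), v (some i) := by
  have h : Measurable fun nv : ℕ × (Option ℕ → ℕ) => ∑ i ∈ range nv.1, nv.2 (some i) :=
    measurable_from_prod_countable_right fun n =>
      Finset.measurable_sum (f := fun i (v : Option ℕ → ℕ) => v (some i)) (range n)
        fun i _ => measurable_pi_apply (some i)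
  exact h.comp (f := fun v => (v none, v)) ((measurable_pi_apply none).prodMk measurable_id)

section Probability

variable {Ω : Type*} [MeasurableSpace Ω] {μ : Measure Ω}

lemma measure_setOf_apply_index_mem {ι β : Type*} [Countable ι] [MeasurableSpace ι]
    [MeasurableSingletonClass ι] [MeasurableSpace β] {N : Ω → ι} {Y : ι → Ω → β}
    {A : ι → Set β} (hN : Measurable N) (hY : ∀ n, Measurable (Y n))
    (hA : ∀ n, MeasurableSet (A n)) (hind : ∀ n, IndepFun N (Y n) μ) :
    μ {ω | Y (N ω) ω ∈ A (N ω)} = ∑' n, μ {ω | N ω = n} * μ (Y n ⁻¹' A n) := by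
  have hunion : {ω | Y (N ω) ω ∈ A (N ω)} = ⋃ n, N ⁻¹' {n} ∩ Y n ⁻¹' A n := by
    ext ω; simp
  rw [hunion, measure_iUnion]
  · exact tsum_congr fun n =>
      (hind n).measure_inter_preimage_eq_mul _ _ (measurableSet_singleton n) (hA n)
  · intro m n hmn
    exact ((Set.disjoint_singleton.2 hmn).preimage N).mono Set.inter_subset_left
      Set.inter_subset_left
  · exact fun n => (hN (measurableSet_singleton n)).inter (hY n (hA n))

lemma measure_preimage_Iic_of_map_eq_exponential {f : Ω → ℝ} {β : ℝ} (hβ : 0 < β)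
    (hf : Measurable f) (hfexp : μ.map f = volume.withDensity (exponentialPDF β)) (t : ℝ) :
    μ (f ⁻¹' Set.Iic t) = ENNReal.ofReal (1 - exp (-β * t)) := by
  rw [← Measure.map_apply hf measurableSet_Iic, hfexp, withDensity_apply _ measurableSet_Iic,
    lintegral_exponentialPDF_eq_antiDeriv hβ, neg_mul]
  split_ifs with ht
  · rfl
  · rw [ENNReal.ofReal_zero, eq_comm, ENNReal.ofReal_eq_zero, sub_nonpos, one_le_exp_iff]
    nlinarith

lemma measure_add_natCast_le_of_exponential {f : Ω → ℝ} {N : Ω → ℕ} {β : ℝ} (hβ : 0 < β)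
    (hf : Measurable f) (hN : Measurable N)
    (hfexp : μ.map f = volume.withDensity (exponentialPDF β)) (hind : IndepFun N f μ)
    (hN0 : μ {ω | N ω = 0} = 0) (δ : ℝ) :
    μ {ω | f ω + N ω ≤ δ} =
      ∑ k ∈ Icc 1 ⌊δ⌋₊, μ {ω | N ω = k} * ENNReal.ofReal (1 - exp (-β * (δ - k))) := by
  have hset : {ω | f ω + N ω ≤ δ} = {ω | f ω ∈ Set.Iic (δ - N ω)} := by
    ext; simp [le_sub_iff_add_le]
  rw [hset]
  refine (measure_setOf_apply_index_mem (Y := fun _ => f) (A := fun k : ℕ => Set.Iic (δ - k)) hN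
    (fun _ => hf) (fun _ => measurableSet_Iic) fun _ => hind).trans ?_
  simp_rw [measure_preimage_Iic_of_map_eq_exponential hβ hf hfexp]
  refine tsum_eq_sum fun k hk => ?_
  rcases Nat.eq_zero_or_pos k with rfl | hk0
  · rw [hN0, zero_mul]
  · have hδk : δ < k := Nat.lt_of_floor_lt (by simp at hk; omega)
    rw [ENNReal.ofReal_eq_zero.2 (sub_nonpos.2 (one_le_exp_iff.2 (by nlinarith))), mul_zero]

variable [IsProbabilityMeasure μ]

lemma measure_setOf_eq_zero_of_geometric {X : Ω → ℕ} {p : ℝ} (hp0 : 0 < p) (hp1 : p ≤ 1)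
    (hX : Measurable X)
    (hpmf : ∀ k, 1 ≤ k → μ {ω | X ω = k} = ENNReal.ofReal (p * (1 - p) ^ (k - 1))) :
    μ {ω | X ω = 0} = 0 := by
  have htotal : ∑' k, μ {ω | X ω = k} = 1 := by
    change ∑' k, μ (X ⁻¹' {k}) = 1
    rw [← measure_iUnion (fun m n hmn => (Set.disjoint_singleton.2 hmn).preimage X)
      fun k => hX (measurableSet_singleton k), ← Set.preimage_iUnion, Set.iUnion_of_singleton,
      Set.preimage_univ, measure_univ]
  have hgeom : ∑' k, μ {ω | X ω = k + 1} = 1 := by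
    have h1p : 0 ≤ 1 - p := by linarith
    simp_rw [hpmf _ (Nat.le_add_left 1 _), Nat.add_sub_cancel, ENNReal.ofReal_mul hp0.le,
      ENNReal.ofReal_pow h1p, ENNReal.tsum_mul_left, ENNReal.tsum_geometric,
      ← ENNReal.ofReal_one, ← ENNReal.ofReal_sub _ h1p, sub_sub_cancel]
    rw [ENNReal.ofReal_one]
    exact ENNReal.mul_inv_cancel (by simpa using hp0) ENNReal.ofReal_ne_top
  rw [tsum_eq_zero_add' ENNReal.summable, hgeom] at htotal
  simpa using htotal

lemma measure_sum_range_eq_negBinomialMass {K : ℕ → Ω → ℕ} {p : ℝ} (hp0 : 0 < p) (hp1 : p ≤ 1)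
    (hK : ∀ i, Measurable (K i)) (hind : iIndepFun K μ)
    (hKpmf : ∀ i k, 1 ≤ k → μ {ω | K i ω = k} = ENNReal.ofReal (p * (1 - p) ^ (k - 1)))
    {h : ℕ} (hh : 1 ≤ h) {k : ℕ} (hk : 1 ≤ k) :
    μ {ω | ∑ i ∈ range h, K i ω = k} = ENNReal.ofReal (negBinomialMass p h k) := by
  have hK0 i : μ {ω | K i ω = 0} = 0 :=
    measure_setOf_eq_zero_of_geometric hp0 hp1 (hK i) (hKpmf i)
  induction h, hh using Nat.le_induction generalizing k with
  | base => simpa [negBinomialMass.one_left] using hKpmf 0 k hk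
  | succ h hh ih =>
    have hS0 : μ {ω | ∑ i ∈ range h, K i ω = 0} = 0 :=
      measure_mono_null (fun ω hω => sum_eq_zero_iff.1 hω 0 (mem_range.2 hh)) (hK0 0)
    have hSK : IndepFun (fun ω => ∑ i ∈ range h, K i ω) (K h) μ := by
      simpa only [← Finset.sum_apply] using
        hind.indepFun_finsetSum_of_notMem hK (notMem_range_self (n := h))
    calc μ {ω | ∑ i ∈ range (h + 1), K i ω = k}
        = ∑' j, μ {ω | ∑ i ∈ range h, K i ω = j} * μ {ω | j + K h ω = k} := by
          simp_rw [sum_range_succ]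
          exact measure_setOf_apply_index_mem (A := fun j => {m | j + m = k})
            (Finset.measurable_sum _ fun i _ => hK i) (fun _ => hK h)
            (fun _ => .of_discrete) fun _ => hSK
      _ = ∑ j ∈ Icc 1 (k - 1), ENNReal.ofReal (negBinomialMass p h j) *
            ENNReal.ofReal (negBinomialMass p 1 (k - j)) := by
          rw [tsum_eq_sum (s := Icc 1 (k - 1))]
          · refine sum_congr rfl fun j hj => ?_
            obtain ⟨hj1, hjk⟩ := mem_Icc.1 hj
            have hset : {ω | j + K h ω = k} = {ω | K h ω = k - j} := by ext; simp; omega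
            rw [ih hj1, hset, hKpmf h _ (by omega), negBinomialMass.one_left]
          · intro j hj
            rcases Nat.eq_zero_or_pos j with rfl | hj0
            · rw [hS0, zero_mul]
            · refine mul_eq_zero_of_right _ (measure_mono_null (fun ω hω => ?_) (hK0 h))
              simp only [Set.mem_ofPred_eq, mem_Icc] at hω hj ⊢
              omega
      _ = ENNReal.ofReal (negBinomialMass p (h + 1) k) := by
          rw [ENNReal.sum_ofReal_mul_ofReal (fun _ _ => negBinomialMass.nonneg hp0.le hp1)
            fun _ _ => negBinomialMass.nonneg hp0.le hp1, negBinomialMass.sum_mul_one_left hh]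

lemma measure_sum_range_index_eq {H : Ω → ℕ} {K : ℕ → Ω → ℕ} {p q C : ℝ} {hmax : ℕ}
    (hp0 : 0 < p) (hp1 : p ≤ 1) (hq0 : 0 ≤ q) (hC : 0 ≤ C)
    (hH : Measurable H) (hK : ∀ i, Measurable (K i)) (hHrange : ∀ ω, H ω ∈ Icc 1 hmax)
    (hHpmf : ∀ h ∈ Icc 1 hmax, μ {ω | H ω = h} = ENNReal.ofReal (C * q ^ (h - 1)))
    (hKpmf : ∀ i k, 1 ≤ k → μ {ω | K i ω = k} = ENNReal.ofReal (p * (1 - p) ^ (k - 1)))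
    (hind : iIndepFun (fun o : Option ℕ => Option.elim o H K) μ) {k : ℕ} (hk : 1 ≤ k) :
    μ {ω | ∑ i ∈ range (H ω), K i ω = k} =
      ENNReal.ofReal (C * ∑ h ∈ Icc 1 (min k hmax), negBinomialMass p h k * q ^ (h - 1)) := by
  have hL o : Measurable (Option.elim o H K) := by
    cases o
    exacts [hH, hK _]
  have hS h : Measurable fun ω => ∑ i ∈ range h, K i ω :=
    Finset.measurable_sum _ fun i _ => hK i
  have hK' : iIndepFun K μ :=
    iIndepFun.precomp (f := fun o : Option ℕ => Option.elim o H K) (Option.some_injective ℕ) hind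
  have hHS h : IndepFun H (fun ω => ∑ i ∈ range h, K i ω) μ := by
    have := hind.indepFun_finsetSum_of_notMem hL (s := (range h).map .some) (i := none) (by simp)
    have hsum : ∑ o ∈ (range h).map .some, Option.elim o H K = fun ω => ∑ i ∈ range h, K i ω := by
      ext ω; simp [Finset.sum_apply]
    exact hsum ▸ this.symm
  calc μ {ω | ∑ i ∈ range (H ω), K i ω = k}
      = ∑' h, μ {ω | H ω = h} * μ {ω | ∑ i ∈ range h, K i ω = k} :=
        measure_setOf_apply_index_mem (A := fun _ => {k}) hH hS
          (fun _ => measurableSet_singleton k) hHS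
    _ = ∑ h ∈ Icc 1 hmax,
          ENNReal.ofReal (C * q ^ (h - 1)) * ENNReal.ofReal (negBinomialMass p h k) := by
        rw [tsum_eq_sum (s := Icc 1 hmax) fun h hh => by
          rw [Set.eq_empty_of_forall_notMem (s := {ω | H ω = h}) fun ω hω => hh (hω ▸ hHrange ω),
            measure_empty, zero_mul]]
        exact sum_congr rfl fun h hh => by
          rw [hHpmf h hh, measure_sum_range_eq_negBinomialMass hp0 hp1 hK
            hK' hKpmf (mem_Icc.1 hh).1 hk]
    _ = ENNReal.ofReal (∑ h ∈ Icc 1 hmax, C * q ^ (h - 1) * negBinomialMass p h k) :=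
        ENNReal.sum_ofReal_mul_ofReal (fun _ _ => by positivity)
          fun _ _ => negBinomialMass.nonneg hp0.le hp1
    _ = ENNReal.ofReal (C * ∑ h ∈ Icc 1 (min k hmax), negBinomialMass p h k * q ^ (h - 1)) := by
        rw [mul_sum, ← sum_subset (Icc_subset_Icc_right (min_le_right k hmax)) fun h hh hh' => by
          rw [negBinomialMass.eq_zero_of_lt hk (by simp at hh hh'; omega), mul_zero]]
        exact congrArg ENNReal.ofReal (sum_congr rfl fun _ _ => by ring)

end Probability

theorem reward_bernoulli_general {Ω : Type*} [MeasurableSpace Ω]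
    (μ : Measure Ω) [IsProbabilityMeasure μ]
    (p q C β δ : ℝ) (hp0 : 0 < p) (hp1 : p ≤ 1) (hq0 : 0 ≤ q)
    (hC : 0 ≤ C) (hβ : 0 < β)
    (hmax : ℕ)
    (H : Ω → ℕ) (K : ℕ → Ω → ℕ) (f : Ω → ℝ)
    (hHmeas : Measurable H) (hKmeas : ∀ i, Measurable (K i)) (hfmeas : Measurable f)
    (hHrange : ∀ ω, H ω ∈ Finset.Icc 1 hmax)
    (hHpmf : ∀ h ∈ Finset.Icc 1 hmax,
      μ {ω | H ω = h} = ENNReal.ofReal (C * q ^ (h - 1)))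
    (hKpmf : ∀ i k, 1 ≤ k →
      μ {ω | K i ω = k} = ENNReal.ofReal (p * (1 - p) ^ (k - 1)))
    (hIndep : iIndepFun
      (fun o : Option ℕ => Option.elim o H K) μ)
    (hfexp : Measure.map f μ = volume.withDensity (exponentialPDF β))
    (hfIndep : IndepFun f
      (fun ω => fun o : Option ℕ => Option.elim o (H ω) (fun i => K i ω)) μ) :
    μ {ω | f ω + ((∑ i ∈ Finset.range (H ω), K i ω : ℕ) : ℝ) ≤ δ} =
      ENNReal.ofReal (C * ∑ k ∈ Finset.Icc 1 ⌊δ⌋₊,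
        (1 - Real.exp (-β * (δ - k))) *
          ∑ h ∈ Finset.Icc 1 (min k hmax),
            ((k - 1).choose (h - 1) : ℝ) * p ^ h * (1 - p) ^ (k - h) * q ^ (h - 1)) := by
  have hT : Measurable fun ω (o : Option ℕ) => Option.elim o (H ω) (fun i => K i ω) :=
    measurable_pi_lambda _ fun o => by cases o; exacts [hHmeas, hKmeas _]
  have hg0 : μ {ω | ∑ i ∈ range (H ω), K i ω = 0} = 0 :=
    measure_mono_null (fun ω hω => sum_eq_zero_iff.1 hω 0 (mem_range.2 (mem_Icc.1 (hHrange ω)).1))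
      (measure_setOf_eq_zero_of_geometric hp0 hp1 (hKmeas 0) (hKpmf 0))
  have hg : Measurable fun ω => ∑ i ∈ range (H ω), K i ω := measurable_sum_range_apply_none.comp hT
  have hfg : IndepFun (fun ω => ∑ i ∈ range (H ω), K i ω) f μ :=
    (hfIndep.comp measurable_id measurable_sum_range_apply_none).symm
  rw [measure_add_natCast_le_of_exponential hβ hfmeas hg hfexp hfg hg0,
    sum_congr rfl fun k hk => by
      rw [measure_sum_range_index_eq hp0 hp1 hq0 hC hHmeas hKmeas hHrange hHpmf hKpmf hIndep
        (mem_Icc.1 hk).1],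
    ENNReal.sum_ofReal_mul_ofReal (fun _ _ => mul_nonneg hC (sum_nonneg fun _ _ =>
      mul_nonneg (negBinomialMass.nonneg hp0.le hp1) (pow_nonneg hq0 _))) fun k hk => ?_, mul_sum]
  · exact congrArg ENNReal.ofReal (sum_congr rfl fun _ _ => by simp only [negBinomialMass]; ring)
  · have hkδ : (k : ℝ) ≤ δ := (Nat.le_floor_iff' (by simp at hk; omega)).1 (mem_Icc.1 hk).2
    exact sub_nonneg.2 (exp_le_one_iff.2 (by nlinarith))

/-- Proposition 2: the offloading reward `r = 𝟙{f + g ≤ δ}` is Bernoulli with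
success probability
`P(r = 1) = C·∑_{k=1}^{⌊δ⌋} (1 - e^{-β(δ-k)})·∑_{h=1}^{min(k,h_max)} C(k-1,h-1)p^h(1-p)^{k-h}q^{h-1}`,
where `g = ∑_{i=1}^{H} K_i` with `P(H = h) = C·q^{h-1}` on `{1,…,h_max}`, the `K_i`
i.i.d. geometric with parameter `p` and independent of `H`, and `f` exponential with
rate `β`, independent of `(H, (K_i))`. -/
theorem reward_bernoulli {Ω : Type*} [MeasurableSpace Ω]
    (μ : Measure Ω) [IsProbabilityMeasure μ]
    (p q C β δ : ℝ) (hp0 : 0 < p) (hp1 : p ≤ 1) (hq0 : 0 ≤ q) (hq1 : q < 1)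
    (hC : 0 ≤ C) (hβ : 0 < β) (hδ : 0 ≤ δ)
    (hmax : ℕ) (hhmax : 1 ≤ hmax)
    (H : Ω → ℕ) (K : ℕ → Ω → ℕ) (f : Ω → ℝ)
    (hHmeas : Measurable H) (hKmeas : ∀ i, Measurable (K i)) (hfmeas : Measurable f)
    (hHrange : ∀ ω, H ω ∈ Finset.Icc 1 hmax)
    (hHpmf : ∀ h ∈ Finset.Icc 1 hmax,
      μ {ω | H ω = h} = ENNReal.ofReal (C * q ^ (h - 1)))
    (hKpmf : ∀ i k, 1 ≤ k →
      μ {ω | K i ω = k} = ENNReal.ofReal (p * (1 - p) ^ (k - 1)))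
    (hIndep : iIndepFun
      (fun o : Option ℕ => Option.elim o H K) μ)
    (hfexp : Measure.map f μ = volume.withDensity (exponentialPDF β))
    (hfIndep : IndepFun f
      (fun ω => fun o : Option ℕ => Option.elim o (H ω) (fun i => K i ω)) μ) :
    μ {ω | f ω + ((∑ i ∈ Finset.range (H ω), K i ω : ℕ) : ℝ) ≤ δ} =
      ENNReal.ofReal (C * ∑ k ∈ Finset.Icc 1 ⌊δ⌋₊,
        (1 - Real.exp (-β * (δ - k))) *
          ∑ h ∈ Finset.Icc 1 (min k hmax),
            ((k - 1).choose (h - 1) : ℝ) * p ^ h * (1 - p) ^ (k - h) * q ^ (h - 1)) :=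
  reward_bernoulli_general μ p q C β δ hp0 hp1 hq0 hC hβ hmax H K f hHmeas hKmeas hfmeas hHrange
    hHpmf hKpmf hIndep hfexp hfIndep
end

section
/- Let a, a′ > 0, a″ ≥ 0, β > 0, p ∈ (0,1], q ∈ [0,1), C ≥ 0, and let h_max ≥ 1 be an integer. On a probability space, let H take values in {1, …, h_max} with P(H = h) = C·q^(h−1); let (K_i)_{i≥1} be i.i.d. geometric random variables on the positive integers with parameter p, independent of H; let g = Σ_{i=1}^{H} K_i; let f be exponentially distributed with rate β, independent of (H, (K_i)); and define c = a·f + a′·g + a″. Then the law of c is absolutely continuous with respect to Lebesgue measure with density f_c(x) = (C/a) · Σ_{k=1}^{⌊(x−a″)/a′⌋} [ β·e^(−β(x−a″−a′k)/a) · Σ_{h=1}^{min(k, h_max)} C(k−1, h−1) p^h (1−p)^(k−h) q^(h−1) ] for x ≥ a′ + a″, and f_c(x) = 0 for x < a′ + a″. -/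
/-!
Conditioning on `H`, the transmission time `g = ∑_{i<H} K_i` is a mixture of sums of `h`
i.i.d. geometric variables. Such a sum is negative binomial: inductively, its law convolved with
one more geometric law is again negative binomial, by the hockey-stick identity. Hence
`P(g = k) = C ∑_h C(k-1,h-1) p^h (1-p)^(k-h) q^(h-1)` for `k ≥ 1`, and `P(g = 0) = 0`.

Since `f` is independent of `g`, the law of `c` is the mixture over `k` of the laws of
`a f + a' k + a''`. Each of these has the exponential density rescaled by `a` and shifted by
`a' k + a''`. That density vanishes for `k > (x - a'') / a'`, which leaves the finite sum over
`1 ≤ k ≤ ⌊(x - a'') / a'⌋`.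
-/

open MeasureTheory ProbabilityTheory Real Finset
open scoped ENNReal

lemma Nat.sum_Icc_one_choose_pred (n k : ℕ) :
    ∑ j ∈ Icc 1 n, (j - 1).choose k = n.choose (k + 1) := by
  induction n with
  | zero => simp
  | succ n ih =>
    rw [sum_Icc_succ_top (by omega), ih, Nat.add_sub_cancel, Nat.choose_succ_succ' n k,
      add_comm]

lemma negBinomial_convolution_geometric (p : ℝ) {h k : ℕ} (hh : 1 ≤ h) :
    ∑ j ∈ Icc 1 (k - 1), ((j - 1).choose (h - 1) * p ^ h * (1 - p) ^ (j - h)) *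
        (p * (1 - p) ^ (k - j - 1)) =
      (k - 1).choose h * p ^ (h + 1) * (1 - p) ^ (k - (h + 1)) := by
  have hterm : ∀ j ∈ Icc 1 (k - 1),
      ((j - 1).choose (h - 1) * p ^ h * (1 - p) ^ (j - h)) * (p * (1 - p) ^ (k - j - 1)) =
        (j - 1).choose (h - 1) * (p ^ (h + 1) * (1 - p) ^ (k - (h + 1))) := by
    intro j hj
    rw [mem_Icc] at hj
    rcases lt_or_ge j h with hjh | hjh
    · simp [Nat.choose_eq_zero_of_lt (by omega : j - 1 < h - 1)]
    · rw [show k - (h + 1) = (j - h) + (k - j - 1) by omega, pow_add, pow_succ]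
      ring
  rw [sum_congr rfl hterm, ← sum_mul, ← Nat.cast_sum, Nat.sum_Icc_one_choose_pred,
    Nat.sub_add_cancel hh, mul_assoc]

lemma ENNReal.tsum_ofReal_geometric {p : ℝ} (hp0 : 0 < p) (hp1 : p ≤ 1) :
    ∑' n : ℕ, ENNReal.ofReal (p * (1 - p) ^ n) = 1 := by
  have hsum : HasSum (fun n : ℕ ↦ p * (1 - p) ^ n) 1 := by
    simpa [hp0.ne'] using
      (hasSum_geometric_of_lt_one (by linarith) (by linarith : 1 - p < 1)).mul_left p
  rw [← ENNReal.ofReal_tsum_of_nonneg (fun n ↦ mul_nonneg hp0.le (pow_nonneg (by linarith) n))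
    hsum.summable, hsum.tsum_eq, ENNReal.ofReal_one]

lemma measurable_randomSum {α : Type*} [MeasurableSpace α] {N : α → ℕ} {X : ℕ → α → ℕ}
    (hN : Measurable N) (hX : ∀ i, Measurable (X i)) :
    Measurable fun x ↦ ∑ i ∈ range (N x), X i x :=
  (measurable_from_prod_countable_right (f := fun nx : ℕ × α ↦ ∑ i ∈ range nx.1, X i nx.2)
    fun n ↦ measurable_sum (range n) fun i _ ↦ hX i).comp (hN.prodMk measurable_id)

lemma map_withDensity_affine {d : ℝ → ℝ≥0∞} (hd : Measurable d) {a : ℝ} (ha : 0 < a) (b : ℝ) :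
    (volume.withDensity d).map (fun x ↦ a * x + b) =
      volume.withDensity fun y ↦ ENNReal.ofReal a⁻¹ * d ((y - b) / a) := by
  have hφ : Measurable fun x : ℝ ↦ a * x + b := by fun_prop
  have hvolume : volume.map (fun x : ℝ ↦ a * x + b) = ENNReal.ofReal a⁻¹ • volume := by
    rw [show (fun x : ℝ ↦ a * x + b) = (· + b) ∘ (a * ·) from rfl,
      ← Measure.map_map (measurable_add_const b) (measurable_const_mul a),
      Real.map_volume_mul_left ha.ne', Measure.map_smul, map_add_right_eq_self,
      abs_of_pos (inv_pos.mpr ha)]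
  ext s hs
  have hF : Measurable fun y ↦ d ((y - b) / a) := by fun_prop
  rw [Measure.map_apply hφ hs, withDensity_apply _ (hφ hs), withDensity_apply _ hs,
    lintegral_const_mul _ hF, ← smul_eq_mul, ← lintegral_smul_measure, ← Measure.restrict_smul,
    ← hvolume, setLIntegral_map hs hF hφ]
  congr 1 with x
  congr 1
  field_simp
  ring

lemma tsum_mul_exponentialPDF_affine {w : ℕ → ℝ≥0∞} (hw0 : w 0 = 0) {a a' : ℝ} (ha : 0 < a)
    (ha' : 0 < a') (β a'' y : ℝ) :
    ∑' k : ℕ, w k * (ENNReal.ofReal a⁻¹ * exponentialPDF β ((y - (a' * k + a'')) / a)) =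
      ∑ k ∈ Icc 1 ⌊(y - a'') / a'⌋₊,
        w k * ENNReal.ofReal (β * exp (-β * (y - a'' - a' * k) / a) / a) := by
  rw [tsum_eq_sum (s := Icc 1 ⌊(y - a'') / a'⌋₊)]
  · refine sum_congr rfl fun k hk ↦ ?_
    have hk' : (k : ℝ) ≤ (y - a'') / a' :=
      (Nat.le_floor_iff' (by simp at hk; omega)).mp (mem_Icc.mp hk).2
    have harg : 0 ≤ (y - (a' * k + a'')) / a := by
      rw [le_div_iff₀ ha'] at hk'
      exact div_nonneg (by linarith) ha.le
    rw [exponentialPDF_of_nonneg harg, ← ENNReal.ofReal_mul (inv_nonneg.mpr ha.le)]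
    congr 2
    rw [show -β * (y - a'' - a' * k) / a = -(β * ((y - (a' * k + a'')) / a)) by ring]
    ring
  · intro k hk
    rcases Nat.eq_zero_or_pos k with rfl | hpos
    · rw [hw0, zero_mul]
    · have hk' : (y - a'') / a' < k :=
        Nat.lt_of_floor_lt (by simp only [mem_Icc, not_and, not_le] at hk; exact hk hpos)
      rw [div_lt_iff₀ ha'] at hk'
      rw [exponentialPDF_of_neg (div_neg_of_neg_of_pos (by linarith) ha), mul_zero, mul_zero]

lemma Icc_one_floor_eq_empty {a' a'' x : ℝ} (ha' : 0 < a') (hx : x < a' + a'') :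
    Icc 1 ⌊(x - a'') / a'⌋₊ = ∅ := by
  rw [Nat.floor_eq_zero.mpr ((div_lt_one ha').mpr (by linarith))]
  rfl

section Probability

variable {Ω : Type*} [MeasurableSpace Ω] {μ : Measure Ω}

lemma ProbabilityTheory.IndepFun.measure_add_eq_sum {A B : Ω → ℕ} (hA : Measurable A)
    (hB : Measurable B) (hAB : IndepFun A B μ) (k : ℕ) :
    μ {ω | A ω + B ω = k} = ∑ j ∈ range (k + 1), μ {ω | A ω = j} * μ {ω | B ω = k - j} := by
  have hset : {ω | A ω + B ω = k} = ⋃ j ∈ range (k + 1), A ⁻¹' {j} ∩ B ⁻¹' {k - j} := by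
    ext ω
    simp only [Set.mem_ofPred_eq, Set.mem_iUnion, mem_range, Set.mem_inter_iff,
      Set.mem_preimage, Set.mem_singleton_iff, exists_prop]
    constructor
    · intro hω
      exact ⟨A ω, by omega, rfl, by omega⟩
    · rintro ⟨j, hj, rfl, hB⟩
      omega
  rw [hset, measure_biUnion_finset]
  · exact sum_congr rfl fun j _ ↦ hAB.measure_inter_preimage_eq_mul _ _
      (measurableSet_singleton _) (measurableSet_singleton _)
  · intro i _ j _ hij
    exact Set.disjoint_left.mpr fun ω hi hj ↦ hij (hi.1.symm.trans hj.1)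
  · exact fun j _ ↦ (hA (measurableSet_singleton _)).inter (hB (measurableSet_singleton _))

lemma measure_eq_zero_of_geometric [IsProbabilityMeasure μ] {X : Ω → ℕ} (hX : Measurable X)
    {p : ℝ} (hp0 : 0 < p) (hp1 : p ≤ 1)
    (hpmf : ∀ k, 1 ≤ k → μ {ω | X ω = k} = ENNReal.ofReal (p * (1 - p) ^ (k - 1))) :
    μ {ω | X ω = 0} = 0 := by
  rw [← prob_compl_eq_one_iff (s := {ω | X ω = 0}) (hX (measurableSet_singleton 0))]
  have hcompl : {ω | X ω = 0}ᶜ = ⋃ n : ℕ, X ⁻¹' {n + 1} := by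
    ext ω
    simp only [Set.mem_compl_iff, Set.mem_ofPred_eq, Set.mem_iUnion, Set.mem_preimage,
      Set.mem_singleton_iff]
    exact ⟨fun h ↦ ⟨X ω - 1, by omega⟩, fun ⟨n, hn⟩ ↦ by omega⟩
  rw [hcompl, measure_iUnion (fun i j hij ↦ Set.disjoint_left.mpr fun ω hi hj ↦ by
      simp_all) fun n ↦ hX (measurableSet_singleton _), ← ENNReal.tsum_ofReal_geometric hp0 hp1]
  exact tsum_congr fun n ↦ hpmf (n + 1) n.succ_pos

lemma map_eq_sum_of_indepFun_nat {α β : Type*} [MeasurableSpace α] [MeasurableSpace β]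
    {X : Ω → α} {N : Ω → ℕ} (hX : Measurable X) (hN : Measurable N) (hXN : IndepFun X N μ)
    {φ : ℕ → α → β} (hφ : ∀ k, Measurable (φ k)) :
    μ.map (fun ω ↦ φ (N ω) (X ω)) =
      Measure.sum fun k ↦ μ {ω | N ω = k} • (μ.map X).map (φ k) := by
  have hmeas : Measurable fun ω ↦ φ (N ω) (X ω) :=
    (measurable_from_prod_countable_right (f := fun kx : ℕ × α ↦ φ kx.1 kx.2) hφ).comp
      (hN.prodMk hX)
  ext s hs
  have hpre : (fun ω ↦ φ (N ω) (X ω)) ⁻¹' s = ⋃ k, X ⁻¹' (φ k ⁻¹' s) ∩ N ⁻¹' {k} := by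
    ext ω
    simp
  rw [Measure.map_apply hmeas hs, Measure.sum_apply _ hs, hpre, measure_iUnion]
  · refine tsum_congr fun k ↦ ?_
    rw [hXN.measure_inter_preimage_eq_mul _ _ ((hφ k) hs) (measurableSet_singleton k),
      Measure.smul_apply, Measure.map_apply (hφ k) hs, Measure.map_apply hX ((hφ k) hs),
      smul_eq_mul, mul_comm]
    rfl
  · intro i j hij
    exact Set.disjoint_left.mpr fun ω hi hj ↦ hij (hi.2.symm.trans hj.2)
  · exact fun k ↦ (hX ((hφ k) hs)).inter (hN (measurableSet_singleton k))

lemma map_affine_add_nat_eq_withDensity {X : Ω → ℝ} {N : Ω → ℕ} (hX : Measurable X)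
    (hN : Measurable N) (hXN : IndepFun X N μ) {d : ℝ → ℝ≥0∞} (hd : Measurable d)
    (hXd : μ.map X = volume.withDensity d) {a : ℝ} (ha : 0 < a) (a' b : ℝ) :
    μ.map (fun ω ↦ a * X ω + a' * N ω + b) = volume.withDensity fun y ↦
      ∑' k : ℕ, μ {ω | N ω = k} * (ENNReal.ofReal a⁻¹ * d ((y - (a' * k + b)) / a)) := by
  have hdensity : (fun y ↦
      ∑' k : ℕ, μ {ω | N ω = k} * (ENNReal.ofReal a⁻¹ * d ((y - (a' * k + b)) / a))) =
      ∑' k : ℕ, μ {ω | N ω = k} • fun y ↦ ENNReal.ofReal a⁻¹ * d ((y - (a' * k + b)) / a) := by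
    ext y
    rw [ENNReal.tsum_apply]
    rfl
  calc μ.map (fun ω ↦ a * X ω + a' * N ω + b)
      = Measure.sum fun k : ℕ ↦ μ {ω | N ω = k} • (μ.map X).map (fun x ↦ a * x + (a' * k + b)) := by
        rw [← map_eq_sum_of_indepFun_nat hX hN hXN fun k ↦ by fun_prop]
        congr with ω
        ring
    _ = _ := by
        rw [hdensity, withDensity_tsum fun k ↦ by fun_prop, hXd]
        simp_rw [map_withDensity_affine hd ha]
        refine congrArg Measure.sum (funext fun k ↦ ?_)
        rw [withDensity_smul _ (by fun_prop)]

section RandomSum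

variable {H : Ω → ℕ} {K : ℕ → Ω → ℕ}

lemma indepFun_sum_range (hIndep : iIndepFun (fun o : Option ℕ ↦ Option.elim o H K) μ)
    (hH : Measurable H) (hK : ∀ i, Measurable (K i)) {h : ℕ} {o : Option ℕ}
    (ho : ∀ i < h, o ≠ some i) :
    IndepFun (fun ω ↦ ∑ i ∈ range h, K i ω) (Option.elim o H K) μ := by
  have hmeas : ∀ o : Option ℕ, Measurable (Option.elim o H K) := by
    rintro (_ | i)
    exacts [hH, hK i]
  have hnotMem : o ∉ (range h).map ⟨some, Option.some_injective ℕ⟩ := by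
    simpa [eq_comm] using ho
  convert hIndep.indepFun_finsetSum_of_notMem hmeas hnotMem using 1
  ext ω
  simp

lemma measure_sum_range_eq_zero {N : Ω → ℕ} (hN : ∀ ω, 1 ≤ N ω)
    (hK0 : μ {ω | K 0 ω = 0} = 0) : μ {ω | ∑ i ∈ range (N ω), K i ω = 0} = 0 :=
  measure_mono_null (fun ω hω ↦ (sum_eq_zero_iff.mp hω) 0 (mem_range.mpr (hN ω))) hK0

theorem measure_sum_range_eq_negBinomial [IsProbabilityMeasure μ]
    (hIndep : iIndepFun (fun o : Option ℕ ↦ Option.elim o H K) μ)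
    (hH : Measurable H) (hK : ∀ i, Measurable (K i)) {p : ℝ} (hp0 : 0 < p) (hp1 : p ≤ 1)
    (hKpmf : ∀ i k, 1 ≤ k → μ {ω | K i ω = k} = ENNReal.ofReal (p * (1 - p) ^ (k - 1)))
    {h : ℕ} (hh : 1 ≤ h) {k : ℕ} (hk : 1 ≤ k) :
    μ {ω | ∑ i ∈ range h, K i ω = k} =
      ENNReal.ofReal ((k - 1).choose (h - 1) * p ^ h * (1 - p) ^ (k - h)) := by
  have hK0 : ∀ i, μ {ω | K i ω = 0} = 0 :=
    fun i ↦ measure_eq_zero_of_geometric (hK i) hp0 hp1 (hKpmf i)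
  have h1p : 0 ≤ 1 - p := by linarith
  induction h, hh using Nat.le_induction generalizing k with
  | base => simpa using hKpmf 0 k hk
  | succ h hh ih =>
    have hindep : IndepFun (fun ω ↦ ∑ i ∈ range h, K i ω) (K h) μ :=
      indepFun_sum_range (o := some h) hIndep hH hK fun i hi ↦ by
        simp only [ne_eq, Option.some.injEq]
        omega
    simp only [sum_range_succ]
    rw [hindep.measure_add_eq_sum (by fun_prop) (hK h), ← sum_subset (s₁ := Icc 1 (k - 1))]
    · have hterm : ∀ j ∈ Icc 1 (k - 1),
          μ {ω | ∑ i ∈ range h, K i ω = j} * μ {ω | K h ω = k - j} =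
            ENNReal.ofReal (((j - 1).choose (h - 1) * p ^ h * (1 - p) ^ (j - h)) *
              (p * (1 - p) ^ (k - j - 1))) := by
        intro j hj
        rw [mem_Icc] at hj
        rw [ih (by omega), hKpmf h (k - j) (by omega), ← ENNReal.ofReal_mul (by positivity)]
      rw [sum_congr rfl hterm, ← ENNReal.ofReal_sum_of_nonneg fun j _ ↦ by positivity,
        negBinomial_convolution_geometric p hh, Nat.add_sub_cancel]
    · intro j hj
      simp only [mem_Icc, mem_range] at hj ⊢
      omega
    · intro j hj hj'
      simp only [mem_Icc, mem_range] at hj hj'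
      rcases (by omega : j = 0 ∨ j = k) with rfl | rfl
      · rw [measure_sum_range_eq_zero (N := fun _ ↦ h) (fun _ ↦ hh) (hK0 0), zero_mul]
      · rw [Nat.sub_self, hK0 h, mul_zero]

lemma measure_randomSum_eq_sum (hIndep : iIndepFun (fun o : Option ℕ ↦ Option.elim o H K) μ)
    (hH : Measurable H) (hK : ∀ i, Measurable (K i)) {s : Finset ℕ} (hHs : ∀ ω, H ω ∈ s)
    (k : ℕ) :
    μ {ω | ∑ i ∈ range (H ω), K i ω = k} =
      ∑ h ∈ s, μ {ω | H ω = h} * μ {ω | ∑ i ∈ range h, K i ω = k} := by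
  have hset : {ω | ∑ i ∈ range (H ω), K i ω = k} =
      ⋃ h ∈ s, H ⁻¹' {h} ∩ {ω | ∑ i ∈ range h, K i ω = k} := by
    ext ω
    simp only [Set.mem_ofPred_eq, Set.mem_iUnion, Set.mem_inter_iff, Set.mem_preimage,
      Set.mem_singleton_iff, exists_prop]
    exact ⟨fun hω ↦ ⟨H ω, hHs ω, rfl, hω⟩, fun ⟨h, _, hH, hω⟩ ↦ hH ▸ hω⟩
  have hmeas : ∀ h, MeasurableSet {ω | ∑ i ∈ range h, K i ω = k} :=
    fun h ↦ (measurableSet_singleton k).preimage (by fun_prop)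
  rw [hset, measure_biUnion_finset]
  · refine sum_congr rfl fun h _ ↦ ?_
    exact (indepFun_sum_range (o := none) hIndep hH hK fun _ _ ↦ nofun).symm
      |>.measure_inter_preimage_eq_mul _ _ (measurableSet_singleton h) (measurableSet_singleton k)
  · intro i _ j _ hij
    exact Set.disjoint_left.mpr fun ω hi hj ↦ hij (hi.1.symm.trans hj.1)
  · exact fun h _ ↦ (hH (measurableSet_singleton h)).inter (hmeas h)

theorem measure_randomSum_eq [IsProbabilityMeasure μ]
    (hIndep : iIndepFun (fun o : Option ℕ ↦ Option.elim o H K) μ)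
    (hH : Measurable H) (hK : ∀ i, Measurable (K i)) {p q C : ℝ} (hp0 : 0 < p) (hp1 : p ≤ 1)
    (hq0 : 0 ≤ q) (hC : 0 ≤ C) {hmax : ℕ} (hHrange : ∀ ω, H ω ∈ Icc 1 hmax)
    (hHpmf : ∀ h ∈ Icc 1 hmax, μ {ω | H ω = h} = ENNReal.ofReal (C * q ^ (h - 1)))
    (hKpmf : ∀ i k, 1 ≤ k → μ {ω | K i ω = k} = ENNReal.ofReal (p * (1 - p) ^ (k - 1)))
    {k : ℕ} (hk : 1 ≤ k) :
    μ {ω | ∑ i ∈ range (H ω), K i ω = k} =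
      ENNReal.ofReal (C * ∑ h ∈ Icc 1 (min k hmax),
        (k - 1).choose (h - 1) * p ^ h * (1 - p) ^ (k - h) * q ^ (h - 1)) := by
  have h1p : 0 ≤ 1 - p := by linarith
  have hterm : ∀ h ∈ Icc 1 hmax,
      μ {ω | H ω = h} * μ {ω | ∑ i ∈ range h, K i ω = k} =
        ENNReal.ofReal
          (C * ((k - 1).choose (h - 1) * p ^ h * (1 - p) ^ (k - h) * q ^ (h - 1))) := by
    intro h hh
    rw [hHpmf h hh, measure_sum_range_eq_negBinomial hIndep hH hK hp0 hp1 hKpmf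
      (mem_Icc.mp hh).1 hk, ← ENNReal.ofReal_mul (by positivity)]
    congr 1
    ring
  rw [measure_randomSum_eq_sum hIndep hH hK hHrange, sum_congr rfl hterm,
    ← ENNReal.ofReal_sum_of_nonneg fun h _ ↦ by positivity, ← mul_sum,
    ← sum_subset (s₁ := Icc 1 (min k hmax))]
  · intro h hh
    simp only [mem_Icc] at hh ⊢
    omega
  · intro h hh hh'
    simp only [mem_Icc] at hh hh'
    simp [Nat.choose_eq_zero_of_lt (by omega : k - 1 < h - 1)]

end RandomSum

end Probability

theorem cost_density_general {Ω : Type*} [MeasurableSpace Ω]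
    (μ : Measure Ω) [IsProbabilityMeasure μ]
    (a a' a'' β p q C : ℝ) (ha : 0 < a) (ha' : 0 < a') (hβ : 0 < β)
    (hp0 : 0 < p) (hp1 : p ≤ 1) (hq0 : 0 ≤ q) (hC : 0 ≤ C)
    (hmax : ℕ)
    (H : Ω → ℕ) (K : ℕ → Ω → ℕ) (f : Ω → ℝ)
    (hHmeas : Measurable H) (hKmeas : ∀ i, Measurable (K i)) (hfmeas : Measurable f)
    (hHrange : ∀ ω, H ω ∈ Finset.Icc 1 hmax)
    (hHpmf : ∀ h ∈ Finset.Icc 1 hmax,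
      μ {ω | H ω = h} = ENNReal.ofReal (C * q ^ (h - 1)))
    (hKpmf : ∀ i k, 1 ≤ k →
      μ {ω | K i ω = k} = ENNReal.ofReal (p * (1 - p) ^ (k - 1)))
    (hIndep : iIndepFun
      (fun o : Option ℕ => Option.elim o H K) μ)
    (hfexp : Measure.map f μ = volume.withDensity (exponentialPDF β))
    (hfIndep : IndepFun f
      (fun ω => fun o : Option ℕ => Option.elim o (H ω) (fun i => K i ω)) μ) :
    Measure.map
        (fun ω => a * f ω + a' * ((∑ i ∈ Finset.range (H ω), K i ω : ℕ) : ℝ) + a'') μ =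
      volume.withDensity (fun x => ENNReal.ofReal
        (if x < a' + a'' then 0 else
          (C / a) * ∑ k ∈ Finset.Icc 1 ⌊(x - a'') / a'⌋₊,
            β * Real.exp (-β * (x - a'' - a' * k) / a) *
              ∑ h ∈ Finset.Icc 1 (min k hmax),
                ((k - 1).choose (h - 1) : ℝ) * p ^ h * (1 - p) ^ (k - h) * q ^ (h - 1))) := by
  set g : Ω → ℕ := fun ω ↦ ∑ i ∈ range (H ω), K i ω
  have hfg : IndepFun f g μ := hfIndep.comp measurable_id
    (measurable_randomSum (measurable_pi_apply none) fun i ↦ measurable_pi_apply (some i))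
  have hg0 : μ {ω | g ω = 0} = 0 :=
    measure_sum_range_eq_zero (fun ω ↦ (mem_Icc.mp (hHrange ω)).1)
      (measure_eq_zero_of_geometric (hKmeas 0) hp0 hp1 (hKpmf 0))
  rw [map_affine_add_nat_eq_withDensity hfmeas (measurable_randomSum hHmeas hKmeas) hfg
    (d := exponentialPDF β) (measurable_exponentialPDFReal β).ennreal_ofReal hfexp ha]
  congr with y
  rw [tsum_mul_exponentialPDF_affine hg0 ha ha']
  split_ifs with hy
  · simp [Icc_one_floor_eq_empty ha' hy]
  have h1p : 0 ≤ 1 - p := by linarith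
  rw [mul_sum, ENNReal.ofReal_sum_of_nonneg fun k _ ↦ by positivity]
  refine sum_congr rfl fun k hk ↦ ?_
  rw [measure_randomSum_eq hIndep hHmeas hKmeas hp0 hp1 hq0 hC hHrange hHpmf hKpmf
    (mem_Icc.mp hk).1, ← ENNReal.ofReal_mul (by positivity)]
  congr 1
  ring

/-- Proposition 3 (distribution part): the energy cost `c = a·f + a′·g + a″`, with
`f` exponential of rate `β` independent of `(H, (K_i))` and `g = ∑_{i=1}^{H} K_i`
the transmission time (`P(H = h) = C·q^{h-1}` on `{1,…,h_max}`, `K_i` i.i.d.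
geometric with parameter `p` independent of `H`), has law absolutely continuous
with respect to Lebesgue measure, with the stated density: for `x ≥ a′ + a″`,
`f_c(x) = (C/a)·∑_{k=1}^{⌊(x-a″)/a′⌋} β e^{-β(x-a″-a′k)/a}·
  ∑_{h=1}^{min(k,h_max)} C(k-1,h-1) p^h (1-p)^{k-h} q^{h-1}`,
and `f_c(x) = 0` for `x < a′ + a″`. -/
theorem cost_density {Ω : Type*} [MeasurableSpace Ω]
    (μ : Measure Ω) [IsProbabilityMeasure μ]
    (a a' a'' β p q C : ℝ) (ha : 0 < a) (ha' : 0 < a') (ha'' : 0 ≤ a'') (hβ : 0 < β)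
    (hp0 : 0 < p) (hp1 : p ≤ 1) (hq0 : 0 ≤ q) (hq1 : q < 1) (hC : 0 ≤ C)
    (hmax : ℕ) (hhmax : 1 ≤ hmax)
    (H : Ω → ℕ) (K : ℕ → Ω → ℕ) (f : Ω → ℝ)
    (hHmeas : Measurable H) (hKmeas : ∀ i, Measurable (K i)) (hfmeas : Measurable f)
    (hHrange : ∀ ω, H ω ∈ Finset.Icc 1 hmax)
    (hHpmf : ∀ h ∈ Finset.Icc 1 hmax,
      μ {ω | H ω = h} = ENNReal.ofReal (C * q ^ (h - 1)))
    (hKpmf : ∀ i k, 1 ≤ k →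
      μ {ω | K i ω = k} = ENNReal.ofReal (p * (1 - p) ^ (k - 1)))
    (hIndep : iIndepFun
      (fun o : Option ℕ => Option.elim o H K) μ)
    (hfexp : Measure.map f μ = volume.withDensity (exponentialPDF β))
    (hfIndep : IndepFun f
      (fun ω => fun o : Option ℕ => Option.elim o (H ω) (fun i => K i ω)) μ) :
    Measure.map
        (fun ω => a * f ω + a' * ((∑ i ∈ Finset.range (H ω), K i ω : ℕ) : ℝ) + a'') μ =
      volume.withDensity (fun x => ENNReal.ofReal
        (if x < a' + a'' then 0 else
          (C / a) * ∑ k ∈ Finset.Icc 1 ⌊(x - a'') / a'⌋₊,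
            β * Real.exp (-β * (x - a'' - a' * k) / a) *
              ∑ h ∈ Finset.Icc 1 (min k hmax),
                ((k - 1).choose (h - 1) : ℝ) * p ^ h * (1 - p) ^ (k - h) * q ^ (h - 1))) :=
  cost_density_general μ a a' a'' β p q C ha ha' hβ hp0 hp1 hq0 hC hmax H K f hHmeas hKmeas hfmeas
    hHrange hHpmf hKpmf hIndep hfexp hfIndep
end

section
/- Let r_max > 0, c_min > 0, and let e be a real number with 0 < e < c_min. Let μ, η, r̄, c̄ be real numbers with 0 ≤ μ ≤ r_max, η ≥ c_min, r̄ ≤ μ + e, and c̄ ≥ η − e. Then r̄/c̄ − μ/η ≤ e/(c_min − e) + e·r_max/((c_min − e)·c_min). -/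
/-- Key algebraic inequality in the proof of Theorem 1: if the empirical mean reward
`r̄` overshoots the true mean `μ ∈ [0, r_max]` by at most `e`, and the empirical mean
cost `c̄` undershoots the true mean `η ≥ c_min` by at most `e`, with `0 < e < c_min`,
then `r̄/c̄ - μ/η ≤ e/(c_min - e) + e·r_max/((c_min - e)·c_min)`. -/
theorem ratio_deviation_bound (r_max c_min e : ℝ)
    (hr : 0 < r_max) (hc : 0 < c_min) (he0 : 0 < e) (hec : e < c_min)
    (μ η rbar cbar : ℝ)
    (hμ0 : 0 ≤ μ) (hμ : μ ≤ r_max) (hη : c_min ≤ η)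
    (hrbar : rbar ≤ μ + e) (hcbar : η - e ≤ cbar) :
    rbar / cbar - μ / η ≤ e / (c_min - e) + e * r_max / ((c_min - e) * c_min) := by
  have hce : 0 < c_min - e := by linarith
  have hηe : 0 < η - e := by linarith
  have hcb : 0 < cbar := by linarith
  have hη0 : 0 < η := by linarith
  have h1 : rbar / cbar ≤ (μ + e) / (η - e) := by
    calc rbar / cbar ≤ (μ + e) / cbar := by gcongr
      _ ≤ (μ + e) / (η - e) := by
        apply div_le_div_of_nonneg_left (by linarith) hηe hcbar
  have h3 : (μ + e) / (η - e) - μ / η ≤ e / (c_min - e) + e * r_max / ((c_min - e) * c_min) := by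
    rw [div_sub_div _ _ (ne_of_gt hηe) (ne_of_gt hη0),
      div_add_div _ _ (by positivity) (by positivity),
      div_le_div_iff₀ (by positivity) (by positivity)]
    have h4 : (c_min - e) * c_min ≤ (η - e) * η := by nlinarith
    have hA : μ * ((c_min - e) * c_min) ≤ r_max * ((η - e) * η) :=
      mul_le_mul hμ h4 (by positivity) hr.le
    have hB : η * ((c_min - e) * c_min) ≤ c_min * ((η - e) * η) := by nlinarith [mul_nonneg (mul_pos hc hη0).le (sub_nonneg.2 hη)]
    have hC : (η + μ) * ((c_min - e) * c_min) ≤ (c_min + r_max) * ((η - e) * η) := by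
      nlinarith
    nlinarith [mul_le_mul_of_nonneg_left hC (mul_pos he0 hce).le]
  linarith
end
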